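/- arXiv:2205.05546 — 7 statements merged into one kernel-verified Lean document; each statement's English description precedes it below -/
import Mathlib

section
/- Let X = [x̲, x̄], φ : X → X continuous, U : X → ℝ continuous and quasi-convex. If x* ∈ X satisfies U(x*) < U(c) for every fixed point c of φ, then either φ(x) > x for all x in the lower contour set L := {x : U(x) ≤ U(x*)}, or φ(x) < x for all x ∈ L. -/
/-! The lower contour set `L` of a quasi-convex function is convex, hence an interval. Since `L`
contains no fixed point of `φ`, the continuous function `φ x - x` has no zero on `L`, so by the
intermediate value theorem its sign is constant there. -/

open Set

theorem IsPreconnected.forall_lt_or_forall_gt_of_forall_ne {X α : Type*} [TopologicalSpace X]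
    [LinearOrder α] [TopologicalSpace α] [OrderClosedTopology α] {s : Set X}
    (hs : IsPreconnected s) {f g : X → α} (hf : ContinuousOn f s) (hg : ContinuousOn g s)
    (hne : ∀ x ∈ s, f x ≠ g x) :
    (∀ x ∈ s, f x < g x) ∨ (∀ x ∈ s, g x < f x) := by
  by_contra! ⟨⟨a, ha, hga⟩, ⟨b, hb, hfb⟩⟩
  obtain ⟨c, hc, hfgc⟩ := hs.intermediate_value₂ hb ha hf hg hfb hga
  exact hne c hc hfgc

theorem stmt_5_general (xl xu : ℝ) (φ U : ℝ → ℝ)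
    (hφcont : ContinuousOn φ (Set.Icc xl xu))
    (hUqc : QuasiconvexOn ℝ (Set.Icc xl xu) U)
    (xstar : ℝ)
    (hlt : ∀ c ∈ Set.Icc xl xu, φ c = c → U xstar < U c) :
    (∀ x ∈ Set.Icc xl xu, U x ≤ U xstar → x < φ x) ∨
    (∀ x ∈ Set.Icc xl xu, U x ≤ U xstar → φ x < x) := by
  set L := {x ∈ Icc xl xu | U x ≤ U xstar}
  have hL : IsPreconnected L := (hUqc (U xstar)).isPreconnected
  have hφL : ContinuousOn φ L := hφcont.mono fun x hx => hx.1
  have hnofix : ∀ x ∈ L, x ≠ φ x := fun x ⟨hx, hUx⟩ hfix =>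
    (hlt x hx hfix.symm).not_ge hUx
  refine (hL.forall_lt_or_forall_gt_of_forall_ne continuousOn_id hφL hnofix).imp ?_ ?_ <;>
    exact fun h x hx hUx => h x ⟨hx, hUx⟩

/-- With quasi-convex `U` and no fixed point of `φ` in the lower contour set
of `x*`, the sign of `φ(x) − x` is constant on that lower contour set. -/
theorem stmt_5 (xl xu : ℝ) (φ U : ℝ → ℝ)
    (hφcont : ContinuousOn φ (Set.Icc xl xu))
    (hφmaps : ∀ x ∈ Set.Icc xl xu, φ x ∈ Set.Icc xl xu)
    (hUcont : ContinuousOn U (Set.Icc xl xu))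
    (hUqc : QuasiconvexOn ℝ (Set.Icc xl xu) U)
    (xstar : ℝ) (hxstar : xstar ∈ Set.Icc xl xu)
    (hlt : ∀ c ∈ Set.Icc xl xu, φ c = c → U xstar < U c) :
    (∀ x ∈ Set.Icc xl xu, U x ≤ U xstar → x < φ x) ∨
    (∀ x ∈ Set.Icc xl xu, U x ≤ U xstar → φ x < x) :=
  stmt_5_general xl xu φ U hφcont hUqc xstar hlt
end

section
/- Suppose u : X × Y → ℝ is C², R_F : X → Y is nondecreasing, u is strictly increasing in its second argument (u₂ > 0), u(·, y) is strictly concave for each y, and φ(x) := the unique maximizer of u(·, R_F(x)) satisfies φ(x) > x for all x < x_C, where x_C ∈ int X. Then U(x) := u(x, R_F(x)) is strictly increasing on [x̲, x_C]. -/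
/-!
Take `p < q < x_C`, so `q < φ q`. If `q ≤ φ p`, strict concavity of `u(·, R_F p)` with maximum at
`φ p` gives `u(p, R_F p) < u(q, R_F p)`; otherwise `u(p, R_F p) ≤ u(φ p, R_F p)`, and concavity
of `u(·, R_F q)` with maximum at `φ q ≥ q` gives `u(φ p, R_F q) < u(q, R_F q)`. In both cases
`R_F p ≤ R_F q` and `u₂ > 0` close the gap. The endpoint `x_C` is reached by a limit: `U ≤ u(·, R_F x_C)`
on `[x̲, x_C)`, and the concave function `u(·, R_F x_C)` is continuous at the interior point `x_C`.
-/

open Set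

section ConcaveMax

variable {𝕜 β : Type*} [Field 𝕜] [LinearOrder 𝕜] [IsStrictOrderedRing 𝕜]
  [AddCommMonoid β] [LinearOrder β] [IsOrderedAddMonoid β] [Module 𝕜 β] [PosSMulStrictMono 𝕜 β]
  {s : Set 𝕜} {f : 𝕜 → β} {m : 𝕜}

theorem StrictConcaveOn.strictMonoOn_of_isMaxOn (hf : StrictConcaveOn 𝕜 s f)
    (hm : IsMaxOn f s m) (hms : m ∈ s) : StrictMonoOn f (s ∩ Iic m) := by
  have hlt : ∀ {x y}, x ∈ s → x < y → y < m → f x < f y := fun hx hxy hym => by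
    have hmin := hf.lt_on_openSegment hx hms (hxy.trans hym).ne
      (by rw [openSegment_eq_Ioo (hxy.trans hym)]; exact ⟨hxy, hym⟩)
    rwa [min_eq_left (hm hx)] at hmin
  rintro x ⟨hx, -⟩ y ⟨hy, hym⟩ hxy
  rcases hym.lt_or_eq with hym | rfl
  · exact hlt hx hxy hym
  · obtain ⟨w, hxw, hwy⟩ := exists_between hxy
    exact (hlt hx hxw hwy).trans_le (hm (hf.1.ordConnected.out hx hy ⟨hxw.le, hwy.le⟩))

end ConcaveMax

theorem StrictMonoOn.Icc_of_Ico_of_le {α β : Type*} [LinearOrder α] [TopologicalSpace α]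
    [OrderTopology α] [DenselyOrdered α] [LinearOrder β] [TopologicalSpace β]
    [OrderClosedTopology β] {U V : α → β} {a b : α} (hU : StrictMonoOn U (Ico a b))
    (hUV : ∀ x ∈ Ico a b, U x ≤ V x) (hV : ContinuousWithinAt V (Iio b) b) (hVb : V b = U b) :
    StrictMonoOn U (Icc a b) := by
  rintro x ⟨hax, -⟩ y ⟨-, hyb⟩ hxy
  rcases hyb.lt_or_eq with hyb | rfl
  · exact hU ⟨hax, hxy.trans hyb⟩ ⟨hax.trans hxy.le, hyb⟩ hxy
  obtain ⟨c, hxc, hcy⟩ := exists_between hxy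
  have hcV : U c ≤ V y := by
    have := nhdsLT_neBot_of_exists_lt ⟨c, hcy⟩
    refine ge_of_tendsto hV ?_
    filter_upwards [Ioo_mem_nhdsLT hcy] with z hz
    exact (hU ⟨hax.trans hxc.le, hcy⟩ ⟨hax.trans (hxc.trans hz.1).le, hz.2⟩ hz.1).le.trans
      (hUV z ⟨hax.trans (hxc.trans hz.1).le, hz.2⟩)
  calc U x < U c := hU ⟨hax, hxc.trans hcy⟩ ⟨hax.trans hxc.le, hcy⟩ hxc
    _ ≤ U y := hVb ▸ hcV

section Leader

variable {s t : Set ℝ} {u : ℝ → ℝ → ℝ} {R φ : ℝ → ℝ}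

theorem reducedPayoff_lt_of_le_maximizer (hR : MonotoneOn R s) (hRt : MapsTo R s t)
    (hu : ∀ x ∈ s, MonotoneOn (u x) t)
    (hconc : ∀ y ∈ t, StrictConcaveOn ℝ s (u · y))
    (hφ : ∀ x ∈ s, φ x ∈ s ∧ IsMaxOn (u · (R x)) s (φ x))
    {p q : ℝ} (hp : p ∈ s) (hq : q ∈ s) (hpq : p < q) (hqφ : q ≤ φ q) :
    u p (R p) < u q (R q) := by
  obtain ⟨hφp, hmaxp⟩ := hφ p hp
  obtain ⟨hφq, hmaxq⟩ := hφ q hq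
  have hRpq : ∀ x ∈ s, u x (R p) ≤ u x (R q) := fun x hx =>
    hu x hx (hRt hp) (hRt hq) (hR hp hq hpq.le)
  rcases le_or_gt q (φ p) with hqp | hpq'
  · calc u p (R p) < u q (R p) :=
          (hconc _ (hRt hp)).strictMonoOn_of_isMaxOn hmaxp hφp
            ⟨hp, hpq.le.trans hqp⟩ ⟨hq, hqp⟩ hpq
      _ ≤ u q (R q) := hRpq q hq
  · calc u p (R p) ≤ u (φ p) (R p) := hmaxp hp
      _ ≤ u (φ p) (R q) := hRpq _ hφp
      _ < u q (R q) :=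
          (hconc _ (hRt hq)).strictMonoOn_of_isMaxOn hmaxq hφq
            ⟨hφp, hpq'.le.trans hqφ⟩ ⟨hq, hqφ⟩ hpq'

end Leader

theorem stmt_7_general (xl xu y1 y2 xC : ℝ) (u : ℝ → ℝ → ℝ) (RF φ : ℝ → ℝ)
    (hRFmono : MonotoneOn RF (Set.Icc xl xu))
    (hRFmaps : ∀ x ∈ Set.Icc xl xu, RF x ∈ Set.Icc y1 y2)
    (hu2 : ∀ x ∈ Set.Icc xl xu, StrictMonoOn (fun y => u x y) (Set.Icc y1 y2))
    (hconc : ∀ y ∈ Set.Icc y1 y2, StrictConcaveOn ℝ (Set.Icc xl xu) (fun x => u x y))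
    (hφmax : ∀ x ∈ Set.Icc xl xu, φ x ∈ Set.Icc xl xu ∧
      ∀ z ∈ Set.Icc xl xu, z ≠ φ x → u z (RF x) < u (φ x) (RF x))
    (hxC : xC ∈ Set.Ioo xl xu)
    (hφgt : ∀ x ∈ Set.Icc xl xu, x < xC → x < φ x) :
    StrictMonoOn (fun x => u x (RF x)) (Set.Icc xl xC) := by
  have hsub : Ico xl xC ⊆ Icc xl xu := Ico_subset_Icc_self.trans (Icc_subset_Icc_right hxC.2.le)
  have hCs : xC ∈ Icc xl xu := Ioo_subset_Icc_self hxC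
  have hu : ∀ x ∈ Icc xl xu, MonotoneOn (u x) (Icc y1 y2) := fun x hx => (hu2 x hx).monotoneOn
  have hφ : ∀ x ∈ Icc xl xu, φ x ∈ Icc xl xu ∧ IsMaxOn (u · (RF x)) (Icc xl xu) (φ x) :=
    fun x hx => ⟨(hφmax x hx).1, isMaxOn_iff.2 fun z hz => by
      rcases eq_or_ne z (φ x) with rfl | hne
      exacts [le_rfl, ((hφmax x hx).2 z hz hne).le]⟩
  refine StrictMonoOn.Icc_of_Ico_of_le (V := (u · (RF xC))) ?_ ?_ ?_ rfl
  · exact fun p hp q hq hpq => reducedPayoff_lt_of_le_maximizer hRFmono hRFmaps hu hconc hφ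
      (hsub hp) (hsub hq) hpq (hφgt q (hsub hq) hq.2).le
  · exact fun x hx => hu x (hsub hx) (hRFmaps x (hsub hx)) (hRFmaps xC hCs)
      (hRFmono (hsub hx) hCs hx.2.le)
  · have hcont := (hconc _ (hRFmaps xC hCs)).concaveOn.continuousOn_interior
    rw [interior_Icc] at hcont
    exact (hcont.continuousAt (Ioo_mem_nhds hxC.1 hxC.2)).continuousWithinAt

/-- Lemma A.1: with positive externalities and a nondecreasing follower best
response, the leader's reduced payoff `U` is strictly increasing below the
unique Cournot action. -/
theorem stmt_7 (xl xu y1 y2 xC : ℝ) (u : ℝ → ℝ → ℝ) (RF φ : ℝ → ℝ)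
    (hC2 : ContDiff ℝ 2 (Function.uncurry u))
    (hRFmono : MonotoneOn RF (Set.Icc xl xu))
    (hRFmaps : ∀ x ∈ Set.Icc xl xu, RF x ∈ Set.Icc y1 y2)
    (hu2 : ∀ x ∈ Set.Icc xl xu, StrictMonoOn (fun y => u x y) (Set.Icc y1 y2))
    (hconc : ∀ y ∈ Set.Icc y1 y2, StrictConcaveOn ℝ (Set.Icc xl xu) (fun x => u x y))
    (hφmax : ∀ x ∈ Set.Icc xl xu, φ x ∈ Set.Icc xl xu ∧
      ∀ z ∈ Set.Icc xl xu, z ≠ φ x → u z (RF x) < u (φ x) (RF x))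
    (hxC : xC ∈ Set.Ioo xl xu)
    (hφgt : ∀ x ∈ Set.Icc xl xu, x < xC → x < φ x) :
    StrictMonoOn (fun x => u x (RF x)) (Set.Icc xl xC) :=
  stmt_7_general xl xu y1 y2 xC u RF φ hRFmono hRFmaps hu2 hconc hφmax hxC hφgt
end

section
/- Suppose u₂ > 0 and R_F is nondecreasing. Let (K, β) be an admissible pair implementing action x*, meaning: every X_i ∈ K satisfies β(X_i) ∈ X_i and u(x, R_F(β(X_i))) ≤ u(β(X_i), R_F(β(X_i))) for all x ∈ X_i, and U(β(X_j)) ≤ U(x*) for all X_j ∈ K. If x ∈ X satisfies U(x) > U(x*), then β(X_i) < x for every X_i ∈ K containing x. -/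
theorem stmt_9_general (u : ℝ → ℝ → ℝ) (RF : ℝ → ℝ)
    (hu2 : ∀ x : ℝ, StrictMono (fun y => u x y))
    (hRF : Monotone RF)
    (K : Set (Set ℝ)) (β : Set ℝ → ℝ) (xstar : ℝ)
    (hadm : ∀ Xi ∈ K, ∀ x ∈ Xi, u x (RF (β Xi)) ≤ u (β Xi) (RF (β Xi)))
    (himp : ∀ Xj ∈ K, u (β Xj) (RF (β Xj)) ≤ u xstar (RF xstar)) :
    ∀ x : ℝ, u xstar (RF xstar) < u x (RF x) →
      ∀ Xi ∈ K, x ∈ Xi → β Xi < x := by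
  intro x hx Xi hXi hxXi
  by_contra! hβx
  have hU : u x (RF x) ≤ u xstar (RF xstar) :=
    calc u x (RF x) ≤ u x (RF (β Xi)) := (hu2 x).monotone (hRF hβx)
      _ ≤ u (β Xi) (RF (β Xi)) := hadm Xi hXi x hxXi
      _ ≤ u xstar (RF xstar) := himp Xi hXi
  exact hU.not_gt hx

/-- Lemma A.4: in an admissible pair implementing `x*`, any action with payoff
strictly above `U(x*)` is blocked by a strictly smaller action in each element
of the commitment structure containing it. -/
theorem stmt_9 (u : ℝ → ℝ → ℝ) (RF : ℝ → ℝ)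
    (hu2 : ∀ x : ℝ, StrictMono (fun y => u x y))
    (hRF : Monotone RF)
    (K : Set (Set ℝ)) (β : Set ℝ → ℝ) (xstar : ℝ)
    (hmem : ∀ Xi ∈ K, β Xi ∈ Xi)
    (hadm : ∀ Xi ∈ K, ∀ x ∈ Xi, u x (RF (β Xi)) ≤ u (β Xi) (RF (β Xi)))
    (himp : ∀ Xj ∈ K, u (β Xj) (RF (β Xj)) ≤ u xstar (RF xstar)) :
    ∀ x : ℝ, u xstar (RF xstar) < u x (RF x) →
      ∀ Xi ∈ K, x ∈ Xi → β Xi < x :=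
  stmt_9_general u RF hu2 hRF K β xstar hadm himp
end

section
/- Let η(x̃, x) := u(x̃, R_F(x)) − u(x, R_F(x)), and for each x let η(·, x) be strictly concave with unique maximizer φ(x), and suppose φ(z) > z whenever z < x_C. Define γ(z) as the unique point ≠ z with η(γ(z), z) = 0 when it exists. Let (K, β) be an admissible pair, X_i ∈ K, x ∈ X_i, and suppose β(X_i) < min{x_C, x} and γ(β(X_i)) exists. Then β(X_i) < γ(β(X_i)) ≤ x. -/
/-!
A strictly concave function lies strictly above the smaller of its endpoint values inside an
interval. Write `η = η(·, β(X_i))`, which vanishes at `b = β(X_i)` and is positive at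
`φ(b) > b`. A zero `γ < b` would then force `η(b) > 0`, and a zero `γ > x` would force
`η(x) > 0 = η(b)`, against admissibility.
-/

open Set

section

variable {𝕜 M : Type*} [Field 𝕜] [LinearOrder 𝕜] [IsStrictOrderedRing 𝕜]
  [AddCommMonoid M] [LinearOrder M] [IsOrderedAddMonoid M] [Module 𝕜 M] [PosSMulStrictMono 𝕜 M]
  {f : 𝕜 → M}

theorem StrictConcaveOn.min_lt_of_mem_Ioo (hf : StrictConcaveOn 𝕜 univ f) {a b c : 𝕜}
    (hb : b ∈ Ioo a c) : min (f a) (f c) < f b :=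
  hf.lt_on_openSegment trivial trivial (hb.1.trans hb.2).ne (Ioo_subset_openSegment hb)

theorem StrictConcaveOn.lt_of_map_eq_of_map_lt (hf : StrictConcaveOn 𝕜 univ f) {a c m : 𝕜}
    (hc : c ≠ a) (hfc : f c = f a) (ham : a < m) (hfm : f a < f m) : a < c := by
  by_contra! hca
  have := hf.min_lt_of_mem_Ioo ⟨lt_of_le_of_ne hca hc, ham⟩
  rw [hfc, min_eq_left hfm.le] at this
  exact this.false

theorem StrictConcaveOn.le_of_map_eq_of_map_le (hf : StrictConcaveOn 𝕜 univ f) {a c x : 𝕜}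
    (hfc : f c = f a) (hax : a < x) (hfx : f x ≤ f a) : c ≤ x := by
  by_contra! hxc
  have := hf.min_lt_of_mem_Ioo ⟨hax, hxc⟩
  rw [hfc, min_self] at this
  exact this.not_ge hfx

end

theorem stmt_10_general (u : ℝ → ℝ → ℝ) (RF φ : ℝ → ℝ) (xC : ℝ)
    (hconc : ∀ z : ℝ, StrictConcaveOn ℝ Set.univ
      (fun t => u t (RF z) - u z (RF z)))
    (hφmax : ∀ z t : ℝ, t ≠ φ z →
      u t (RF z) - u z (RF z) < u (φ z) (RF z) - u z (RF z))
    (hφgt : ∀ z : ℝ, z < xC → z < φ z)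
    (β : Set ℝ → ℝ) (Xi : Set ℝ)
    (hadm : ∀ x' ∈ Xi, u x' (RF (β Xi)) - u (β Xi) (RF (β Xi)) ≤ 0)
    (x : ℝ) (hx : x ∈ Xi)
    (γb : ℝ) (hγne : γb ≠ β Xi)
    (hγzero : u γb (RF (β Xi)) - u (β Xi) (RF (β Xi)) = 0)
    (hlt : β Xi < min xC x) :
    β Xi < γb ∧ γb ≤ x := by
  set b := β Xi
  obtain ⟨hbxC, hbx⟩ := lt_min_iff.1 hlt
  have hbφ : b < φ b := hφgt b hbxC
  have hγ : u γb (RF b) - u b (RF b) = u b (RF b) - u b (RF b) := by rw [hγzero, sub_self]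
  have hpeak := hφmax b b hbφ.ne
  have hxle : u x (RF b) - u b (RF b) ≤ u b (RF b) - u b (RF b) := by
    rw [sub_self]; exact hadm x hx
  exact ⟨(hconc b).lt_of_map_eq_of_map_lt hγne hγ hbφ hpeak,
    (hconc b).le_of_map_eq_of_map_le hγ hbx hxle⟩

/-- Lemma A.5: if `β(X_i) < min{x_C, x}` for some `x ∈ X_i`, the indifference
point `γ(β(X_i))` lies in `(β(X_i), x]`. -/
theorem stmt_10 (u : ℝ → ℝ → ℝ) (RF φ : ℝ → ℝ) (xC : ℝ)
    (hconc : ∀ z : ℝ, StrictConcaveOn ℝ Set.univ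
      (fun t => u t (RF z) - u z (RF z)))
    (hφmax : ∀ z t : ℝ, t ≠ φ z →
      u t (RF z) - u z (RF z) < u (φ z) (RF z) - u z (RF z))
    (hφgt : ∀ z : ℝ, z < xC → z < φ z)
    (K : Set (Set ℝ)) (β : Set ℝ → ℝ) (Xi : Set ℝ) (hXi : Xi ∈ K)
    (hβmem : β Xi ∈ Xi)
    (hadm : ∀ x' ∈ Xi, u x' (RF (β Xi)) - u (β Xi) (RF (β Xi)) ≤ 0)
    (x : ℝ) (hx : x ∈ Xi)
    (γb : ℝ) (hγne : γb ≠ β Xi)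
    (hγzero : u γb (RF (β Xi)) - u (β Xi) (RF (β Xi)) = 0)
    (hlt : β Xi < min xC x) :
    β Xi < γb ∧ γb ≤ x :=
  stmt_10_general u RF φ xC hconc hφmax hφgt β Xi hadm x hx γb hγne hγzero hlt
end

section
/- In the duopoly with R_F(x) = max{0, (1 − (1−d)x)/(2−r)}, the total-quantity function Q(x) = x + R_F(x) on X = [0, 2/(2−r)] satisfies: if r ≤ d + 1 then Q is nondecreasing, and if r > d + 1 then Q is quasi-convex on X with Q(0) = 1/(2−r) < Q(2/(2−r)) = 2/(2−r). Hence in both cases Q attains its maximum over any closed subset of X containing the largest element at that largest element. -/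
/-!
Adding `x` inside the maximum gives `Q x = max x (a + b * x)` with `a = 1 / (2 - r)` and
slope `b = (1 + d - r) / (2 - r)`. As the maximum of two affine functions, `Q` is convex, and it is
monotone when `b ≥ 0`. By convexity `Q` is bounded on `[0, 2a]` by `max (Q 0) (Q (2a))`, and
`Q 0 = a < 2a ≤ Q (2a)`; when `b < 0`, also `a + b * 2a ≤ a`, so `Q (2a) = 2a`.
-/

open Set

theorem add_max_zero_div_eq_max_affine {d r : ℝ} (hr : r ≠ 2) (x : ℝ) :
    x + max 0 ((1 - (1 - d) * x) / (2 - r)) = max x (1 / (2 - r) + (1 + d - r) / (2 - r) * x) := by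
  have hc : 2 - r ≠ 0 := sub_ne_zero.mpr hr.symm
  rw [← max_add_add_left, add_zero]
  congr 1
  field_simp
  ring

theorem convexOn_max_id_affine (a b : ℝ) : ConvexOn ℝ univ fun x : ℝ => max x (a + b * x) :=
  (convexOn_id convex_univ).sup
    ((convexOn_const a convex_univ).add ((LinearMap.mul ℝ ℝ b).convexOn convex_univ))

theorem monotone_max_id_affine (a : ℝ) {b : ℝ} (hb : 0 ≤ b) :
    Monotone fun x : ℝ => max x (a + b * x) :=
  monotone_id.max (monotone_const.add (monotone_mul_left_of_nonneg hb))

theorem max_id_affine_two_mul_of_nonpos {a b : ℝ} (ha : 0 ≤ a) (hb : b ≤ 0) :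
    max (2 * a) (a + b * (2 * a)) = 2 * a :=
  max_eq_left (by nlinarith)

theorem max_id_affine_le_two_mul {a b x : ℝ} (ha : 0 ≤ a) (hx : x ∈ Icc 0 (2 * a)) :
    max x (a + b * x) ≤ max (2 * a) (a + b * (2 * a)) := by
  have hf0 : max 0 (a + b * 0) ≤ max (2 * a) (a + b * (2 * a)) := by
    rw [mul_zero, add_zero, max_eq_right ha]
    exact le_max_of_le_left (by linarith)
  calc max x (a + b * x) ≤ max (max 0 (a + b * 0)) (max (2 * a) (a + b * (2 * a))) :=
        (convexOn_max_id_affine a b).le_max_of_mem_Icc (mem_univ 0) (mem_univ (2 * a)) hx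
    _ = max (2 * a) (a + b * (2 * a)) := max_eq_right hf0

theorem stmt_16_general (d r : ℝ) (hr : r < 2)
    (Q : ℝ → ℝ)
    (hQ : ∀ x, Q x = x + max 0 ((1 - (1 - d) * x) / (2 - r))) :
    (r ≤ d + 1 → MonotoneOn Q (Set.Icc 0 (2 / (2 - r)))) ∧
    (d + 1 < r →
      QuasiconvexOn ℝ (Set.Icc 0 (2 / (2 - r))) Q ∧
      Q 0 = 1 / (2 - r) ∧ Q (2 / (2 - r)) = 2 / (2 - r) ∧
      Q 0 < Q (2 / (2 - r))) ∧
    (∀ S : Set ℝ, S ⊆ Set.Icc 0 (2 / (2 - r)) → IsClosed S →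
      (2 / (2 - r)) ∈ S → ∀ x ∈ S, Q x ≤ Q (2 / (2 - r))) := by
  have hc : 0 < 2 - r := sub_pos.mpr hr
  have ha : 0 < 1 / (2 - r) := one_div_pos.mpr hc
  obtain rfl : Q = fun x => max x (1 / (2 - r) + (1 + d - r) / (2 - r) * x) :=
    funext fun x => (hQ x).trans (add_max_zero_div_eq_max_affine hr.ne x)
  rw [← mul_one_div 2 (2 - r)]
  set a := 1 / (2 - r)
  refine ⟨fun hrd => (monotone_max_id_affine a (div_nonneg (by linarith) hc.le)).monotoneOn _,
    fun hrd => ?_, fun S hS _ _ x hx => max_id_affine_le_two_mul ha.le (hS hx)⟩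
  have hb : (1 + d - r) / (2 - r) < 0 := div_neg_of_neg_of_pos (by linarith) hc
  have hQM := max_id_affine_two_mul_of_nonpos ha.le hb.le
  refine ⟨((convexOn_max_id_affine _ _).subset (subset_univ _) (convex_Icc _ _)).quasiconvexOn,
    by simp [ha.le], hQM, ?_⟩
  simp only [hQM, mul_zero, add_zero, max_eq_right ha.le]
  linarith

/-- Total quantity `Q(x) = x + R_F(x)` is maximized at the largest quantity:
nondecreasing when `r ≤ d+1`, quasi-convex with endpoint comparison otherwise. -/
theorem stmt_16 (d r : ℝ) (hd : d ∈ Set.Ico (0 : ℝ) 1) (hr : r < 2)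
    (Q : ℝ → ℝ)
    (hQ : ∀ x, Q x = x + max 0 ((1 - (1 - d) * x) / (2 - r))) :
    (r ≤ d + 1 → MonotoneOn Q (Set.Icc 0 (2 / (2 - r)))) ∧
    (d + 1 < r →
      QuasiconvexOn ℝ (Set.Icc 0 (2 / (2 - r))) Q ∧
      Q 0 = 1 / (2 - r) ∧ Q (2 / (2 - r)) = 2 / (2 - r) ∧
      Q 0 < Q (2 / (2 - r))) ∧
    (∀ S : Set ℝ, S ⊆ Set.Icc 0 (2 / (2 - r)) → IsClosed S →
      (2 / (2 - r)) ∈ S → ∀ x ∈ S, Q x ≤ Q (2 / (2 - r))) :=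
  stmt_16_general d r hr Q hQ
end

section
/- Let U(x) = (2(1−r+d)x − ((2−r)² − 2(1−d)²)x²)/(2(2−r)) on [0, 1/(1−d)], with d ∈ [0,1), r < d+1 and (2−r)² − 2(1−d)² > 0. Let x_C = 1/(3−r−d). Then U'(x_C) > 0, and the equation U(x) = U(x_C) with x > x_C has the unique solution x = (2−r)²/((3−r−d)((2−r)² − 2(1−d)²)). -/
/-!
For `U x = (b x - a x²) / c` the difference `U x - U y` factors as `(x - y)(b - a (x + y)) / c`,
so the level set of `x_C` is `{x_C, b / a - x_C}`; with `u = 2 - r`, `v = 1 - d` the second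
point simplifies to `u² / ((u + v)(u² - 2v²))`. The slope `U'(x_C) = v² / (u (u + v))` is positive.
-/

lemma hasDerivAt_quadratic_div (a b c x : ℝ) :
    HasDerivAt (fun x => (b * x - a * x ^ 2) / c) ((b - 2 * a * x) / c) x := by
  refine ((((hasDerivAt_id' x).const_mul b).sub
    ((hasDerivAt_pow 2 x).const_mul a)).div_const c).congr_deriv ?_
  norm_num
  ring

lemma quadratic_div_eq_iff {a c : ℝ} (ha : a ≠ 0) (hc : c ≠ 0) (b x y : ℝ) :
    (b * x - a * x ^ 2) / c = (b * y - a * y ^ 2) / c ↔ x = y ∨ x + y = b / a := by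
  rw [div_left_inj' hc, eq_div_iff ha, ← sub_eq_zero, ← sub_eq_zero (a := x),
    ← sub_eq_zero (a := (x + y) * a)]
  constructor
  · intro h
    have : (x - y) * ((x + y) * a - b) = 0 := by linear_combination -h
    exact mul_eq_zero.mp this
  · rintro (h | h)
    · linear_combination (b - (x + y) * a) * h
    · linear_combination -(x - y) * h

/-- Lemma B.3 computation: `U'(x_C) > 0` and the unique solution of
`U(x) = U(x_C)` above `x_C`. -/
theorem stmt_17 (d r : ℝ) (hd : d ∈ Set.Ico (0 : ℝ) 1) (hr : r < d + 1)
    (hpos : 0 < (2 - r) ^ 2 - 2 * (1 - d) ^ 2)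
    (U : ℝ → ℝ)
    (hU : ∀ x, U x = (2 * (1 - r + d) * x -
      ((2 - r) ^ 2 - 2 * (1 - d) ^ 2) * x ^ 2) / (2 * (2 - r))) :
    0 < deriv U (1 / (3 - r - d)) ∧
    (∀ x : ℝ, 1 / (3 - r - d) < x →
      (U x = U (1 / (3 - r - d)) ↔
        x = (2 - r) ^ 2 / ((3 - r - d) * ((2 - r) ^ 2 - 2 * (1 - d) ^ 2)))) := by
  have hd1 : 0 < 1 - d := by linarith [hd.2]
  have hr2 : 0 < 2 - r := by linarith
  have hs : 0 < 3 - r - d := by linarith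
  refine ⟨?_, fun x hx => ?_⟩
  · have hslope : 2 * (1 - r + d) - 2 * ((2 - r) ^ 2 - 2 * (1 - d) ^ 2) * (1 / (3 - r - d)) =
        2 * (1 - d) ^ 2 / (3 - r - d) := by
      field_simp
      ring
    rw [funext hU, (hasDerivAt_quadratic_div _ _ _ _).deriv, hslope]
    positivity
  · have hmirror : 2 * (1 - r + d) / ((2 - r) ^ 2 - 2 * (1 - d) ^ 2) - 1 / (3 - r - d) =
        (2 - r) ^ 2 / ((3 - r - d) * ((2 - r) ^ 2 - 2 * (1 - d) ^ 2)) := by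
      field_simp
      ring
    rw [hU, hU, quadratic_div_eq_iff hpos.ne' (by positivity), ← hmirror, eq_sub_iff_add_eq]
    simp only [hx.ne', false_or]
end

section
/- Let X = [x̲, x̄], let U : X → ℝ be continuous, and let φ : X → X be continuous. Suppose x* ∈ X and there exist x', x'' in the lower contour set {x : U(x) ≤ U(x*)} with φ(x') ≤ x' ≤ x'' ≤ φ(x''). Then defining K = {{x*}, [x̲, x''], [x', x̄]} and β({x*}) = x*, β([x̲, x'']) = x'', β([x', x̄]) = x', the pair (K, β) satisfies: (a) β(X_i) ∈ X_i for each X_i ∈ K; (b) if for each z with φ(z) ≥ z one has u(x, R_F(z)) ≤ u(z, R_F(z)) for all x ≤ z, and for each z with φ(z) ≤ z one has u(x, R_F(z)) ≤ u(z, R_F(z)) for all x ≥ z, then η(x, β(X_i)) ≤ 0 for all x ∈ X_i and all X_i ∈ K; and (c) U(β(X_i)) ≤ U(x*) for all X_i ∈ K. -/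
theorem stmt_19_general (xl xu xstar x' x'' : ℝ)
    (U : ℝ → ℝ) (u : ℝ → ℝ → ℝ) (RF φ : ℝ → ℝ)
    (hx' : x' ∈ Set.Icc xl xu) (hx'' : x'' ∈ Set.Icc xl xu)
    (hU' : U x' ≤ U xstar) (hU'' : U x'' ≤ U xstar)
    (h1 : φ x' ≤ x') (h3 : x'' ≤ φ x'')
    (K : Set (Set ℝ))
    (hK : K = {{xstar}, Set.Icc xl x'', Set.Icc x' xu})
    (β : Set ℝ → ℝ)
    (hβ1 : β {xstar} = xstar)
    (hβ2 : β (Set.Icc xl x'') = x'')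
    (hβ3 : β (Set.Icc x' xu) = x') :
    (∀ Xi ∈ K, β Xi ∈ Xi) ∧
    ((∀ z : ℝ, z ≤ φ z → ∀ x ≤ z, u x (RF z) ≤ u z (RF z)) →
     (∀ z : ℝ, φ z ≤ z → ∀ x, z ≤ x → u x (RF z) ≤ u z (RF z)) →
      ∀ Xi ∈ K, ∀ x ∈ Xi, u x (RF (β Xi)) - u (β Xi) (RF (β Xi)) ≤ 0) ∧
    (∀ Xi ∈ K, U (β Xi) ≤ U xstar) := by
  subst hK
  simp only [Set.forall_mem_insert, Set.mem_singleton_iff, forall_eq, hβ1, hβ2, hβ3, sub_nonpos]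
  refine ⟨⟨trivial, ⟨hx''.1, le_rfl⟩, le_rfl, hx'.2⟩, fun hA hB => ⟨le_rfl, ?_, ?_⟩, le_rfl, hU'', hU'⟩
  · exact fun x hx => hA x'' h3 x hx.2
  · exact fun x hx => hB x' h1 x hx.1

/-- The explicit construction proving the `if` direction of Theorem 2
(I-plausibility): with `x', x''` in the lower contour set of `x*` satisfying
`φ(x') ≤ x' ≤ x'' ≤ φ(x'')`, the pair `(K, β)` with
`K = {{x*}, [x̲, x''], [x', x̄]}`, `β({x*}) = x*`, `β([x̲, x'']) = x''`,
`β([x', x̄]) = x'` is admissible and implements `x*`. -/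
theorem stmt_19 (xl xu xstar x' x'' : ℝ)
    (U : ℝ → ℝ) (u : ℝ → ℝ → ℝ) (RF φ : ℝ → ℝ)
    (hxstar : xstar ∈ Set.Icc xl xu)
    (hx' : x' ∈ Set.Icc xl xu) (hx'' : x'' ∈ Set.Icc xl xu)
    (hU' : U x' ≤ U xstar) (hU'' : U x'' ≤ U xstar)
    (h1 : φ x' ≤ x') (h2 : x' ≤ x'') (h3 : x'' ≤ φ x'')
    (K : Set (Set ℝ))
    (hK : K = {{xstar}, Set.Icc xl x'', Set.Icc x' xu})
    (β : Set ℝ → ℝ)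
    (hβ1 : β {xstar} = xstar)
    (hβ2 : β (Set.Icc xl x'') = x'')
    (hβ3 : β (Set.Icc x' xu) = x') :
    (∀ Xi ∈ K, β Xi ∈ Xi) ∧
    ((∀ z : ℝ, z ≤ φ z → ∀ x ≤ z, u x (RF z) ≤ u z (RF z)) →
     (∀ z : ℝ, φ z ≤ z → ∀ x, z ≤ x → u x (RF z) ≤ u z (RF z)) →
      ∀ Xi ∈ K, ∀ x ∈ Xi, u x (RF (β Xi)) - u (β Xi) (RF (β Xi)) ≤ 0) ∧
    (∀ Xi ∈ K, U (β Xi) ≤ U xstar) :=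
  stmt_19_general xl xu xstar x' x'' U u RF φ hx' hx'' hU' hU'' h1 h3 K hK β hβ1 hβ2 hβ3
end
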